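/- arXiv:1207.2671 — 7 statements merged into one kernel-verified Lean document; each statement's English description precedes it below -/
import Mathlib

section
/- For positive integers r and squarefree D, the number of pairs of coprime positive integers (p,q) with q² − p² = r²D is at most 2^(ω(rD)−1), where ω(n) denotes the number of distinct prime divisors of n. -/
/-!
Writing `x = q + p`, `y = q - p`, a coprime solution gives a factorisation `x * y = r² D` with
`x > y` and `gcd x y = g := gcd 2 (r² D)`; dividing by `g` yields a coprime factorisation of
`r² D / g²`. A coprime factorisation `a * b = M` is determined by the set of primes dividing `a`,
so there are at most `2 ^ ω(M)` of them, and swapping the factors shows that at most half of them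
have `a > b`.
-/

open Finset

namespace Nat

def coprimeSplits (M : ℕ) : Finset (ℕ × ℕ) :=
  M.divisorsAntidiagonal.filter fun ab => Coprime ab.1 ab.2

theorem Coprime.dvd_of_dvd_mul_of_forall_prime_dvd {a a' b' : ℕ} (hc : Coprime a' b')
    (hdvd : a ∣ a' * b') (hprime : ∀ ℓ, ℓ.Prime → ℓ ∣ a → ℓ ∣ a') : a ∣ a' := by
  have hab' : Coprime a b' := Nat.coprime_of_dvd fun ℓ hℓ hℓa hℓb' =>
    hℓ.one_lt.ne' (Nat.dvd_one.mp (hc ▸ Nat.dvd_gcd (hprime ℓ hℓ hℓa) hℓb'))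
  exact hab'.dvd_of_dvd_mul_right hdvd

theorem eq_of_mem_coprimeSplits {M a b a' b' : ℕ} (h : (a, b) ∈ coprimeSplits M)
    (h' : (a', b') ∈ coprimeSplits M) (hprime : ∀ ℓ ∈ M.primeFactors, ℓ ∣ a ↔ ℓ ∣ a') :
    a = a' := by
  simp only [coprimeSplits, mem_filter, mem_divisorsAntidiagonal] at h h'
  obtain ⟨⟨hab, hM⟩, hc⟩ := h
  obtain ⟨⟨hab', -⟩, hc'⟩ := h'
  have hmem {c d : ℕ} (hcd : c * d = M) {ℓ : ℕ} (hℓ : ℓ.Prime) (hℓc : ℓ ∣ c) :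
      ℓ ∈ M.primeFactors :=
    mem_primeFactors.mpr ⟨hℓ, hℓc.trans (hcd ▸ dvd_mul_right c d), hM⟩
  apply Nat.dvd_antisymm
  · exact hc'.dvd_of_dvd_mul_of_forall_prime_dvd (hab' ▸ hab ▸ dvd_mul_right a b)
      fun ℓ hℓ hℓa => (hprime ℓ (hmem hab hℓ hℓa)).mp hℓa
  · exact hc.dvd_of_dvd_mul_of_forall_prime_dvd (hab ▸ hab' ▸ dvd_mul_right a' b')
      fun ℓ hℓ hℓa => (hprime ℓ (hmem hab' hℓ hℓa)).mpr hℓa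

theorem card_coprimeSplits_le (M : ℕ) : #(coprimeSplits M) ≤ 2 ^ #M.primeFactors := by
  rw [← card_powerset]
  refine card_le_card_of_injOn (fun ab => M.primeFactors.filter (· ∣ ab.1))
    (fun _ _ => mem_powerset.mpr (filter_subset _ _)) ?_
  rintro ⟨a, b⟩ hab ⟨a', b'⟩ hab' heq
  have ha : a = a' := eq_of_mem_coprimeSplits hab hab' (filter_inj'.mp heq)
  subst ha
  simp only [coprimeSplits, mem_coe, mem_filter, mem_divisorsAntidiagonal] at hab hab'
  obtain ⟨⟨hab, hM⟩, -⟩ := hab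
  have ha0 : a ≠ 0 := left_ne_zero_of_mul (hab ▸ hM)
  rw [Nat.eq_of_mul_eq_mul_left (Nat.pos_of_ne_zero ha0) (hab.trans hab'.1.1.symm)]

theorem card_coprimeSplits_filter_lt_le (M : ℕ) :
    #((coprimeSplits M).filter fun ab => ab.2 < ab.1) ≤ 2 ^ (#M.primeFactors - 1) := by
  set s := coprimeSplits M
  have hswap : #(s.filter fun ab => ab.2 < ab.1) ≤ #(s.filter fun ab => ¬ ab.2 < ab.1) := by
    refine card_le_card_of_injOn Prod.swap (fun ab hab => ?_) (Prod.swap_injective.injOn)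
    simp only [s, coprimeSplits, coe_filter, Set.mem_ofPred_eq, mem_filter,
      mem_divisorsAntidiagonal, Prod.fst_swap, Prod.snd_swap] at hab ⊢
    obtain ⟨⟨⟨hab, hM⟩, hc⟩, hlt⟩ := hab
    exact ⟨⟨⟨mul_comm ab.2 ab.1 ▸ hab, hM⟩, hc.symm⟩, hlt.asymm⟩
  have htotal := card_filter_add_card_filter_not (s := s) fun ab => ab.2 < ab.1
  have hbound : #s ≤ 2 ^ #M.primeFactors := card_coprimeSplits_le M
  cases h : #M.primeFactors with
  | zero => rw [h] at hbound; rw [Nat.zero_sub, pow_zero]; omega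
  | succ n => rw [h, pow_succ] at hbound; rw [Nat.add_sub_cancel]; omega

theorem gcd_eq_gcd_two_mul_of_mod_two_eq {x y : ℕ} (hpar : x % 2 = y % 2) (hg : gcd x y ∣ 2) :
    gcd x y = gcd 2 (x * y) := by
  refine Nat.dvd_antisymm (Nat.dvd_gcd hg ((gcd_dvd_left x y).mul_right y)) ?_
  rcases (Nat.dvd_prime prime_two).mp (gcd_dvd_left 2 (x * y)) with h | h
  · exact h ▸ one_dvd _
  · have h2 : 2 ∣ x ∨ 2 ∣ y := prime_two.dvd_mul.mp (h ▸ gcd_dvd_right 2 (x * y))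
    rw [h]
    exact Nat.dvd_gcd (by omega) (by omega)

theorem Coprime.gcd_add_sub_dvd_two {p q : ℕ} (hpq : Coprime p q) (hle : p ≤ q) :
    gcd (q + p) (q - p) ∣ 2 := by
  have hq : gcd (q + p) (q - p) ∣ 2 * q := by
    rw [show 2 * q = (q + p) + (q - p) by omega]
    exact Nat.dvd_add (gcd_dvd_left _ _) (gcd_dvd_right _ _)
  have hp : gcd (q + p) (q - p) ∣ 2 * p := by
    rw [show 2 * p = (q + p) - (q - p) by omega]
    exact Nat.dvd_sub (gcd_dvd_left _ _) (gcd_dvd_right _ _)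
  simpa [Nat.gcd_mul_left, Nat.gcd_comm q p, hpq.gcd_eq_one] using Nat.dvd_gcd hq hp

theorem Coprime.gcd_add_sub_eq_gcd_two {N p q : ℕ} (hpq : Coprime p q) (h : q ^ 2 = p ^ 2 + N) :
    gcd (q + p) (q - p) = gcd 2 N := by
  have hle : p ≤ q := (Nat.pow_le_pow_iff_left two_ne_zero).mp (by omega)
  have hprod : (q + p) * (q - p) = N := by rw [← Nat.sq_sub_sq]; omega
  rw [← hprod]
  exact gcd_eq_gcd_two_mul_of_mod_two_eq (by omega) (hpq.gcd_add_sub_dvd_two hle)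

theorem Coprime.gcd_two_sq_dvd {N p q : ℕ} (hpq : Coprime p q) (h : q ^ 2 = p ^ 2 + N) :
    gcd 2 N ^ 2 ∣ N := by
  have hprod : (q + p) * (q - p) = N := by rw [← Nat.sq_sub_sq]; omega
  rw [← hpq.gcd_add_sub_eq_gcd_two h, sq, ← hprod]
  exact Nat.mul_dvd_mul (gcd_dvd_left _ _) (gcd_dvd_right _ _)

theorem mem_coprimeSplits_of_sq_eq_sq_add {N p q : ℕ} (hN : N ≠ 0) (hp : 0 < p)
    (hpq : Coprime p q) (h : q ^ 2 = p ^ 2 + N) :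
    ((q + p) / gcd 2 N, (q - p) / gcd 2 N) ∈
      (coprimeSplits (N / gcd 2 N ^ 2)).filter fun ab => ab.2 < ab.1 := by
  have hlt : p < q := (Nat.pow_lt_pow_iff_left two_ne_zero).mp (by omega)
  have hprod : (q + p) * (q - p) = N := by rw [← Nat.sq_sub_sq]; omega
  have hdvd := hpq.gcd_two_sq_dvd h
  rw [← hpq.gcd_add_sub_eq_gcd_two h] at hdvd ⊢
  set g := gcd (q + p) (q - p)
  have hg0 : 0 < g := Nat.gcd_pos_of_pos_left _ (by omega)
  simp only [coprimeSplits, mem_filter, mem_divisorsAntidiagonal]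
  refine ⟨⟨⟨?_, ?_⟩, coprime_div_gcd_div_gcd hg0⟩,
    Nat.div_lt_div_of_lt_of_dvd (gcd_dvd_left _ _) (by omega)⟩
  · rw [Nat.div_mul_div_comm (gcd_dvd_left _ _) (gcd_dvd_right _ _), hprod, sq]
  · exact (Nat.div_pos (Nat.le_of_dvd (Nat.pos_of_ne_zero hN) hdvd) (by positivity)).ne'

theorem ncard_coprime_sq_eq_sq_add_le {N : ℕ} (hN : N ≠ 0) :
    {pq : ℕ × ℕ | 0 < pq.1 ∧ 0 < pq.2 ∧ gcd pq.1 pq.2 = 1 ∧ pq.2 ^ 2 = pq.1 ^ 2 + N}.ncard ≤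
      2 ^ (#N.primeFactors - 1) := by
  set S := {pq : ℕ × ℕ | 0 < pq.1 ∧ 0 < pq.2 ∧ gcd pq.1 pq.2 = 1 ∧ pq.2 ^ 2 = pq.1 ^ 2 + N}
  set g := gcd 2 N
  rcases S.eq_empty_or_nonempty with hS | ⟨⟨p₀, q₀⟩, -, -, hpq₀, h₀⟩
  · rw [hS, Set.ncard_empty]
    exact Nat.zero_le _
  have hinj : Set.InjOn (fun pq : ℕ × ℕ => ((pq.2 + pq.1) / g, (pq.2 - pq.1) / g)) S := by
    rintro ⟨p, q⟩ ⟨-, -, hpq, h⟩ ⟨p', q'⟩ ⟨-, -, hpq', h'⟩ heq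
    dsimp only at hpq h hpq' h'
    have hle : p ≤ q := (Nat.pow_le_pow_iff_left two_ne_zero).mp (by omega)
    have hle' : p' ≤ q' := (Nat.pow_le_pow_iff_left two_ne_zero).mp (by omega)
    have hg : gcd (q + p) (q - p) = g := Coprime.gcd_add_sub_eq_gcd_two hpq h
    have hg' : gcd (q' + p') (q' - p') = g := Coprime.gcd_add_sub_eq_gcd_two hpq' h'
    simp only [Prod.mk.injEq] at heq ⊢
    rw [Nat.div_left_inj (hg ▸ gcd_dvd_left _ _) (hg' ▸ gcd_dvd_left _ _),
      Nat.div_left_inj (hg ▸ gcd_dvd_right _ _) (hg' ▸ gcd_dvd_right _ _)] at heq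
    omega
  calc S.ncard ≤ #((coprimeSplits (N / g ^ 2)).filter fun ab => ab.2 < ab.1) := by
        rw [← Set.ncard_coe_finset]
        exact Set.ncard_le_ncard_of_injOn _
          (fun pq ⟨hp, _, hpq, h⟩ => mem_coprimeSplits_of_sq_eq_sq_add hN hp hpq h) hinj
    _ ≤ 2 ^ (#(N / g ^ 2).primeFactors - 1) := card_coprimeSplits_filter_lt_le _
    _ ≤ 2 ^ (#N.primeFactors - 1) := by
        gcongr
        · norm_num
        · exact primeFactors_mono (div_dvd_of_dvd (Coprime.gcd_two_sq_dvd hpq₀ h₀)) hN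

end Nat

theorem stmt_5_general (D r : ℕ) (hD : 0 < D) (hr : 0 < r) :
    Set.ncard {pq : ℕ × ℕ | 0 < pq.1 ∧ 0 < pq.2 ∧ Nat.gcd pq.1 pq.2 = 1 ∧
        pq.2 ^ 2 = pq.1 ^ 2 + r ^ 2 * D}
      ≤ 2 ^ ((r * D).primeFactors.card - 1) := by
  have hprimes : (r ^ 2 * D).primeFactors = (r * D).primeFactors := by
    rw [Nat.primeFactors_mul (by positivity) hD.ne', Nat.primeFactors_pow r two_ne_zero,
      Nat.primeFactors_mul hr.ne' hD.ne']
  exact hprimes ▸ Nat.ncard_coprime_sq_eq_sq_add_le (by positivity)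

theorem stmt_5 (D r : ℕ) (hD : 0 < D) (hr : 0 < r) (hsf : Squarefree D) :
    Set.ncard {pq : ℕ × ℕ | 0 < pq.1 ∧ 0 < pq.2 ∧ Nat.gcd pq.1 pq.2 = 1 ∧
        pq.2 ^ 2 = pq.1 ^ 2 + r ^ 2 * D}
      ≤ 2 ^ ((r * D).primeFactors.card - 1) :=
  stmt_5_general D r hD hr
end

section
/- Let D ≡ 3 (mod 4) be a positive squarefree integer and suppose p² + D = q² with positive integers p, q, p/q ≤ 1/2. Then the lattice Λ = A·ℤ² with A = [[a−b, b],[√D, −√D]], a = 2(p+q), b = p+q, is well-rounded, both columns of A are minimal vectors of squared norm (p+q)² + D = 2q(p+q), and the cosine of the angle between them equals p/q. -/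
lemma aux_inner (a b c d : ℝ) (u v : EuclideanSpace ℝ (Fin 2))
    (hu : u = ![a,b]) (hv : v = ![c,d]) : (inner ℝ u v : ℝ) = a*c + b*d := by
  simp [PiLp.inner_apply, Fin.sum_univ_two, hu, hv] <;> ring

lemma aux_one_le_sq {u : ℤ} (h : u ≠ 0) : (1:ℝ) ≤ (u:ℝ)^2 := by
  have h1 : 1 ≤ |u| := Int.one_le_abs h
  have : (1:ℤ) ≤ u^2 := by nlinarith [sq_abs u]
  exact_mod_cast this

set_option maxHeartbeats 1000000 in
/-- For `D ≡ 3 (mod 4)` squarefree, `p² + D = q²`, `p/q ≤ 1/2`, the lattice spanned by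
the columns `v₁ = (p+q, √D)` and `v₂ = (p+q, -√D)` of `A = [[a-b, b],[√D, -√D]]`
(`a = 2(p+q)`, `b = p+q`) is well-rounded: `v₁, v₂` are linearly independent minimal
vectors of squared norm `(p+q)² + D = 2q(p+q)`, and the cosine of the angle between
them is `p/q`. -/
theorem stmt_8 (D : ℕ) (hD : 0 < D) (hsf : Squarefree D) (hmod : D % 4 = 3)
    (p q : ℕ) (hp : 0 < p) (hq : 0 < q) (hpq : p ^ 2 + D = q ^ 2) (h2 : 2 * p ≤ q)
    (v₁ v₂ : EuclideanSpace ℝ (Fin 2))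
    (hv₁ : v₁ = ![(p + q : ℝ), Real.sqrt D])
    (hv₂ : v₂ = ![(p + q : ℝ), -Real.sqrt D])
    (Λ : Set (EuclideanSpace ℝ (Fin 2)))
    (hΛ : Λ = {v | ∃ x y : ℤ, v = x • v₁ + y • v₂}) :
    LinearIndependent ℝ ![v₁, v₂] ∧
      ‖v₁‖ ^ 2 = 2 * q * (p + q) ∧ ‖v₂‖ ^ 2 = 2 * q * (p + q) ∧
      (∀ v ∈ Λ, v ≠ 0 → 2 * q * (p + q) ≤ ‖v‖ ^ 2) ∧
      (inner ℝ v₁ v₂ : ℝ) / (‖v₁‖ * ‖v₂‖) = (p : ℝ) / q := by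
  have hD0 : (0:ℝ) ≤ (D:ℝ) := by positivity
  have hssq0 : Real.sqrt D * Real.sqrt D = D := Real.mul_self_sqrt hD0
  have hsqpos : 0 < Real.sqrt D := Real.sqrt_pos.2 (by exact_mod_cast hD)
  have hDq : (D:ℝ) = (q:ℝ)^2 - (p:ℝ)^2 := by
    have : (p:ℝ)^2 + D = (q:ℝ)^2 := by exact_mod_cast hpq
    linarith
  have hssq : Real.sqrt D * Real.sqrt D = (q:ℝ)^2 - (p:ℝ)^2 := by rw [hssq0, hDq]
  have hqp : (0:ℝ) < (p:ℝ) + q := by positivity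
  have h2' : 2*(p:ℝ) ≤ q := by exact_mod_cast h2
  have hp' : (0:ℝ) < p := by exact_mod_cast hp
  have hq' : (0:ℝ) < q := by exact_mod_cast hq
  -- squared norms
  have hn1 : ‖v₁‖^2 = 2*q*(p+q) := by
    rw [← real_inner_self_eq_norm_sq, aux_inner _ _ _ _ v₁ v₁ hv₁ hv₁]
    linear_combination hssq
  have hn2 : ‖v₂‖^2 = 2*q*(p+q) := by
    rw [← real_inner_self_eq_norm_sq, aux_inner _ _ _ _ v₂ v₂ hv₂ hv₂]
    linear_combination hssq
  have hin : (inner ℝ v₁ v₂ : ℝ) = 2*p*(p+q) := by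
    rw [aux_inner _ _ _ _ v₁ v₂ hv₁ hv₂]
    linear_combination -hssq
  refine ⟨?_, hn1, hn2, ?_, ?_⟩
  · -- linear independence
    rw [LinearIndependent.pair_iff]
    intro s t hst
    have h0 : (s • v₁ + t • v₂) 0 = 0 := by rw [hst]; rfl
    have h1 : (s • v₁ + t • v₂) 1 = 0 := by rw [hst]; rfl
    simp only [PiLp.add_apply, PiLp.smul_apply, hv₁, hv₂, smul_eq_mul,
      Matrix.cons_val_zero, Matrix.cons_val_one, Matrix.head_cons] at h0 h1
    have hs : s + t = 0 := by
      rcases mul_eq_zero.1 (show (s+t)*((p:ℝ)+q) = 0 by linarith) with h | h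
      · exact h
      · exact absurd h (by positivity)
    have ht : s - t = 0 := by
      rcases mul_eq_zero.1 (show (s-t)*Real.sqrt D = 0 by linarith) with h | h
      · exact h
      · exact absurd h (ne_of_gt hsqpos)
    constructor <;> linarith
  · -- minimality
    intro v hv hv0
    rw [hΛ] at hv
    obtain ⟨x, y, hxy⟩ := hv
    have hn : ‖v‖^2 = ((x:ℝ)+y)^2*((p:ℝ)+q)^2 + ((x:ℝ)-y)^2*D := by
      rw [← real_inner_self_eq_norm_sq, hxy]
      have e1 : ((x:ℤ) • v₁ + (y:ℤ) • v₂) = ((x:ℝ) • v₁ + (y:ℝ) • v₂) := by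
        simp [Int.cast_smul_eq_zsmul ℝ]
      rw [e1]
      have e2 : ((x:ℝ) • v₁ + (y:ℝ) • v₂).ofLp
          = ![((x:ℝ)+y)*((p:ℝ)+q), ((x:ℝ)-y)*Real.sqrt D] := by
        funext i
        fin_cases i <;>
          simp [hv₁, hv₂] <;> ring
      rw [aux_inner _ _ _ _ _ _ e2 e2]
      linear_combination (((x:ℝ)-y)^2) * hssq0
    have hxyne : ¬(x = 0 ∧ y = 0) := by
      rintro ⟨rfl, rfl⟩
      apply hv0
      rw [hxy]; simp
    rw [hn]
    have hid : ((p:ℝ)+q)^2 + D = 2*q*((p:ℝ)+q) := by linear_combination hDq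
    by_cases hu : x + y = 0
    · -- x = -y, x ≠ 0, contribution 4x²D
      have hx0 : x ≠ 0 := fun h => hxyne ⟨h, by omega⟩
      have hu' : (x:ℝ) + y = 0 := by exact_mod_cast congrArg (Int.cast : ℤ → ℝ) hu
      have hw' : (x:ℝ) - y = 2*x := by
        have : y = -x := by omega
        rw [this]; push_cast; ring
      have h1 : (1:ℝ) ≤ (x:ℝ)^2 := aux_one_le_sq hx0
      have hkey : (q:ℝ)*((p:ℝ)+q) ≤ 2*(D:ℝ) := by
        nlinarith [mul_nonneg (by linarith : (0:ℝ) ≤ (q:ℝ)-2*p) (by positivity : (0:ℝ) ≤ (q:ℝ)+p)]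
      rw [hu', hw']
      nlinarith [mul_nonneg hD0 (by linarith : (0:ℝ) ≤ (x:ℝ)^2 - 1)]
    · by_cases hw : x - y = 0
      · have hx0 : x ≠ 0 := fun h => hxyne ⟨h, by omega⟩
        have hw' : (x:ℝ) - y = 0 := by exact_mod_cast congrArg (Int.cast : ℤ → ℝ) hw
        have hu' : (x:ℝ) + y = 2*x := by
          have : y = x := by omega
          rw [this]; push_cast; ring
        have h1 : (1:ℝ) ≤ (x:ℝ)^2 := aux_one_le_sq hx0
        rw [hu', hw']
        nlinarith [mul_nonneg (sq_nonneg ((p:ℝ)+q)) (by linarith : (0:ℝ) ≤ (x:ℝ)^2 - 1)]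
      · have h1 : (1:ℝ) ≤ ((x+y:ℤ):ℝ)^2 := aux_one_le_sq hu
        have h1' : (1:ℝ) ≤ ((x-y:ℤ):ℝ)^2 := aux_one_le_sq hw
        push_cast at h1 h1'
        nlinarith [mul_nonneg (sq_nonneg ((p:ℝ)+q)) (by linarith : (0:ℝ) ≤ ((x:ℝ)+y)^2 - 1),
          mul_nonneg hD0 (by linarith : (0:ℝ) ≤ ((x:ℝ)-y)^2 - 1)]
  · -- cosine
    have hnv : ‖v₁‖ * ‖v₂‖ = 2*q*((p:ℝ)+q) := by
      have hnn1 : 0 ≤ ‖v₁‖ := norm_nonneg _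
      have hnn2 : 0 ≤ ‖v₂‖ := norm_nonneg _
      have e1 : ‖v₁‖ = Real.sqrt (2*q*((p:ℝ)+q)) := by rw [← hn1, Real.sqrt_sq hnn1]
      have e2 : ‖v₂‖ = Real.sqrt (2*q*((p:ℝ)+q)) := by rw [← hn2, Real.sqrt_sq hnn2]
      rw [e1, e2, Real.mul_self_sqrt (by positivity)]
    rw [hin, hnv]
    field_simp
end

section
/- For positive integers p, q, r and squarefree D with p² + Dr² = q², gcd(p,q) = 1, and p/q ≤ 1/2, the lattice Ω = [[q, p],[0, r√D]]·ℤ² is well-rounded: its two basis columns both have squared length q² which is the minimal squared norm of a nonzero lattice vector. -/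
/-!
Since `p² + Dr² = q²`, both basis vectors have squared length `q²` and their inner product is
`pq`, so `‖x v₁ + y v₂‖² = q²(x² + y²) + 2pq·xy`. The condition `2p ≤ q` makes the basis
Lagrange-reduced, `2|⟪v₁, v₂⟫| ≤ ‖v₁‖²`, and then the form is at least `q²(x² + y² - |xy|) ≥ q²`
for integers `(x, y) ≠ 0`.
-/

open scoped InnerProductSpace

theorem Int.abs_mul_add_one_le_sq_add_sq {x y : ℤ} (hxy : ¬(x = 0 ∧ y = 0)) :
    |x * y| + 1 ≤ x ^ 2 + y ^ 2 := by
  have hpos : 0 < x ^ 2 + y ^ 2 := by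
    rcases not_and_or.mp hxy with hx | hy <;> positivity
  nlinarith [sq_nonneg (|x| - |y|), abs_mul x y, sq_abs x, sq_abs y]

section InnerProductSpace

variable {E : Type*} [NormedAddCommGroup E] [InnerProductSpace ℝ E] {v₁ v₂ : E}

theorem linearIndependent_pair_of_abs_inner_lt (h : |⟪v₁, v₂⟫_ℝ| < ‖v₁‖ * ‖v₂‖) :
    LinearIndependent ℝ ![v₁, v₂] := by
  refine Matrix.linearIndependent_of_det_gram_ne_zero (ne_of_gt ?_)
  rw [Matrix.det_fin_two]
  simp only [Matrix.gram_apply, Matrix.cons_val_zero, Matrix.cons_val_one,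
    real_inner_self_eq_norm_sq, real_inner_comm v₁]
  nlinarith [abs_nonneg ⟪v₁, v₂⟫_ℝ, sq_abs ⟪v₁, v₂⟫_ℝ]

theorem norm_zsmul_add_zsmul_sq (x y : ℤ) :
    ‖x • v₁ + y • v₂‖ ^ 2 = x ^ 2 * ‖v₁‖ ^ 2 + 2 * x * y * ⟪v₁, v₂⟫_ℝ + y ^ 2 * ‖v₂‖ ^ 2 := by
  rw [norm_add_sq_real, norm_zsmul ℝ, norm_zsmul ℝ, ← Int.cast_smul_eq_zsmul ℝ x,
    ← Int.cast_smul_eq_zsmul ℝ y, real_inner_smul_left, real_inner_smul_right]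
  simp only [mul_pow, Real.norm_eq_abs, sq_abs]
  ring

theorem sq_norm_le_norm_zsmul_add_zsmul_sq (hv : ‖v₂‖ = ‖v₁‖) (h : 2 * |⟪v₁, v₂⟫_ℝ| ≤ ‖v₁‖ ^ 2)
    {x y : ℤ} (hxy : ¬(x = 0 ∧ y = 0)) : ‖v₁‖ ^ 2 ≤ ‖x • v₁ + y • v₂‖ ^ 2 := by
  have hxy' : |(x : ℝ) * y| + 1 ≤ (x : ℝ) ^ 2 + (y : ℝ) ^ 2 := by
    exact_mod_cast Int.abs_mul_add_one_le_sq_add_sq hxy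
  have hcross : -(|(x : ℝ) * y| * ‖v₁‖ ^ 2) ≤ 2 * x * y * ⟪v₁, v₂⟫_ℝ := by
    have := abs_mul ((x : ℝ) * y) ⟪v₁, v₂⟫_ℝ
    nlinarith [neg_abs_le ((x : ℝ) * y * ⟪v₁, v₂⟫_ℝ), abs_nonneg ((x : ℝ) * y)]
  rw [norm_zsmul_add_zsmul_sq, hv]
  nlinarith [sq_nonneg ‖v₁‖]

end InnerProductSpace

theorem EuclideanSpace.real_norm_sq_eq_fin_two (v : EuclideanSpace ℝ (Fin 2)) :
    ‖v‖ ^ 2 = v 0 ^ 2 + v 1 ^ 2 := by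
  simp [EuclideanSpace.real_norm_sq_eq, Fin.sum_univ_two]

theorem EuclideanSpace.real_inner_eq_fin_two (v w : EuclideanSpace ℝ (Fin 2)) :
    ⟪v, w⟫_ℝ = v 0 * w 0 + v 1 * w 1 := by
  simp [PiLp.inner_apply, Fin.sum_univ_two, mul_comm]

theorem stmt_9_general (D p q r : ℕ) (hq : 0 < q)
    (hpq : p ^ 2 + D * r ^ 2 = q ^ 2) (h2 : 2 * p ≤ q)
    (v₁ v₂ : EuclideanSpace ℝ (Fin 2))
    (hv₁ : v₁ = ![(q : ℝ), 0])
    (hv₂ : v₂ = ![(p : ℝ), r * Real.sqrt D]) :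
    LinearIndependent ℝ ![v₁, v₂] ∧
      ‖v₁‖ ^ 2 = (q : ℝ) ^ 2 ∧ ‖v₂‖ ^ 2 = (q : ℝ) ^ 2 ∧
      (∀ x y : ℤ, ¬(x = 0 ∧ y = 0) → (q : ℝ) ^ 2 ≤ ‖x • v₁ + y • v₂‖ ^ 2) := by
  have hv₁0 : v₁ 0 = (q : ℝ) := congrFun hv₁ 0
  have hv₁1 : v₁ 1 = (0 : ℝ) := congrFun hv₁ 1
  have hv₂0 : v₂ 0 = (p : ℝ) := congrFun hv₂ 0
  have hv₂1 : v₂ 1 = (r : ℝ) * Real.sqrt D := congrFun hv₂ 1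
  have hN₁ : ‖v₁‖ ^ 2 = (q : ℝ) ^ 2 := by
    rw [EuclideanSpace.real_norm_sq_eq_fin_two, hv₁0, hv₁1]
    ring
  have hN₂ : ‖v₂‖ ^ 2 = (q : ℝ) ^ 2 := by
    rw [EuclideanSpace.real_norm_sq_eq_fin_two, hv₂0, hv₂1, mul_pow,
      Real.sq_sqrt D.cast_nonneg]
    linear_combination (by exact_mod_cast hpq : (p : ℝ) ^ 2 + D * r ^ 2 = q ^ 2)
  have hinner : ⟪v₁, v₂⟫_ℝ = q * p := by
    rw [EuclideanSpace.real_inner_eq_fin_two, hv₁0, hv₁1, hv₂0]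
    ring
  have hnorm : ‖v₂‖ = ‖v₁‖ := by
    rwa [← hN₁, pow_left_inj₀ (norm_nonneg _) (norm_nonneg _) two_ne_zero] at hN₂
  have hreduced : 2 * |⟪v₁, v₂⟫_ℝ| ≤ ‖v₁‖ ^ 2 := by
    rw [hinner, hN₁, abs_of_nonneg (by positivity)]
    exact_mod_cast (by nlinarith : 2 * (q * p) ≤ q ^ 2)
  refine ⟨linearIndependent_pair_of_abs_inner_lt ?_, hN₁, hN₂, fun x y hxy => ?_⟩
  · have hq' : (0 : ℝ) < q := by exact_mod_cast hq
    rw [hN₁] at hreduced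
    rw [hnorm, ← sq, hN₁]
    nlinarith [abs_nonneg ⟪v₁, v₂⟫_ℝ]
  · rw [← hN₁]
    exact sq_norm_le_norm_zsmul_add_zsmul_sq hnorm hreduced hxy

/-- For `p² + Dr² = q²`, `gcd(p,q) = 1`, `p/q ≤ 1/2`, the lattice
`Ω = [[q, p],[0, r√D]]·ℤ²` is well-rounded: its basis columns `v₁ = (q, 0)` and
`v₂ = (p, r√D)` are linearly independent, both of squared norm `q²`, which is the
minimal squared norm of a nonzero lattice vector. -/
theorem stmt_9 (D p q r : ℕ) (hD : 0 < D) (hsf : Squarefree D)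
    (hp : 0 < p) (hq : 0 < q) (hr : 0 < r)
    (hpq : p ^ 2 + D * r ^ 2 = q ^ 2) (hcop : Nat.gcd p q = 1) (h2 : 2 * p ≤ q)
    (v₁ v₂ : EuclideanSpace ℝ (Fin 2))
    (hv₁ : v₁ = ![(q : ℝ), 0])
    (hv₂ : v₂ = ![(p : ℝ), r * Real.sqrt D]) :
    LinearIndependent ℝ ![v₁, v₂] ∧
      ‖v₁‖ ^ 2 = (q : ℝ) ^ 2 ∧ ‖v₂‖ ^ 2 = (q : ℝ) ^ 2 ∧
      (∀ x y : ℤ, ¬(x = 0 ∧ y = 0) → (q : ℝ) ^ 2 ≤ ‖x • v₁ + y • v₂‖ ^ 2) :=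
  stmt_9_general D p q r hq hpq h2 v₁ v₂ hv₁ hv₂
end

section
/- Two full-rank well-rounded planar lattices with minimal bases making angles θ₁, θ₂ ∈ [π/3, π/2] respectively are similar (one is obtained from the other by a rotation-scaling, i.e. Λ₂ = αUΛ₁ with α > 0 and U orthogonal) if and only if θ₁ = θ₂. -/
/-!
A similarity `v ↦ α • U v` multiplies the minimum of a lattice by `α`, and the Gram determinant
`‖u‖² ‖v‖² - ⟪u, v⟫²` of any pair of vectors by `α⁴`. The images of `x₁, y₁` are integral
combinations of `x₂, y₂` with coefficient matrix of determinant `n`, so comparing Gram determinants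
gives `1 - cos² θ₁ = n² (1 - cos² θ₂)`. Both `1 - cos² θᵢ` lie in `[3/4, 1]` because the angles lie
in `[π/3, π/2]`, which forces `n² = 1` and hence `θ₁ = θ₂`.

Conversely, if `θ₁ = θ₂` then the Gram matrices of the two bases are proportional, so the linear
map sending one basis to the other is a similarity.
-/

open Real RealInnerProductSpace InnerProductGeometry Set

variable {E F : Type*} [NormedAddCommGroup E] [InnerProductSpace ℝ E]
  [NormedAddCommGroup F] [InnerProductSpace ℝ F]

def gramDet (x y : E) : ℝ := ‖x‖ ^ 2 * ‖y‖ ^ 2 - ⟪x, y⟫ ^ 2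

lemma gramDet_smul (α : ℝ) (x y : E) : gramDet (α • x) (α • y) = α ^ 4 * gramDet x y := by
  simp only [gramDet, norm_smul, real_inner_smul_left, real_inner_smul_right, mul_pow,
    Real.norm_eq_abs, sq_abs]
  ring

lemma LinearIsometry.gramDet_map (f : E →ₗᵢ[ℝ] F) (x y : E) :
    gramDet (f x) (f y) = gramDet x y := by
  simp only [gramDet, f.norm_map, f.inner_map_map]

lemma gramDet_smul_add_smul (a b c d : ℝ) (x y : E) :
    gramDet (a • x + b • y) (c • x + d • y) = (a * d - b * c) ^ 2 * gramDet x y := by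
  simp only [gramDet, ← real_inner_self_eq_norm_sq, inner_add_left, inner_add_right,
    real_inner_smul_left, real_inner_smul_right, real_inner_comm x y]
  ring

lemma gramDet_zsmul_add_zsmul (a b c d : ℤ) (x y : E) :
    gramDet (a • x + b • y) (c • x + d • y) = ((a * d - b * c : ℤ) : ℝ) ^ 2 * gramDet x y := by
  simpa only [← Int.cast_smul_eq_zsmul ℝ, Int.cast_sub, Int.cast_mul] using
    gramDet_smul_add_smul (a : ℝ) b c d x y

lemma inner_eq_of_norm_eq {x y : E} (h : ‖x‖ = ‖y‖) :
    ⟪x, y⟫ = ‖x‖ ^ 2 * cos (angle x y) := by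
  rw [← cos_angle_mul_norm_mul_norm, ← h]
  ring

lemma gramDet_eq_of_norm_eq {x y : E} (h : ‖x‖ = ‖y‖) :
    gramDet x y = ‖x‖ ^ 4 * (1 - cos (angle x y) ^ 2) := by
  rw [gramDet, inner_eq_of_norm_eq h, ← h]
  ring

lemma Real.cos_mem_Icc_of_mem_Icc_pi_div_three {θ : ℝ} (hθ : θ ∈ Icc (π / 3) (π / 2)) :
    cos θ ∈ Icc 0 (1 / 2) := by
  have := pi_pos
  refine ⟨cos_nonneg_of_mem_Icc ⟨by linarith [hθ.1], hθ.2⟩, ?_⟩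
  rw [← cos_pi_div_three]
  exact cos_le_cos_of_nonneg_of_le_pi (by positivity) (by linarith [hθ.2]) hθ.1

lemma eq_of_one_sub_sq_eq_int_sq_mul {c₁ c₂ : ℝ} (n : ℤ) (h₁ : c₁ ∈ Icc 0 (1 / 2))
    (h₂ : c₂ ∈ Icc 0 (1 / 2)) (h : 1 - c₁ ^ 2 = (n : ℝ) ^ 2 * (1 - c₂ ^ 2)) : c₁ = c₂ := by
  obtain ⟨h₁0, h₁1⟩ := h₁
  obtain ⟨h₂0, h₂1⟩ := h₂
  have hpos : (0 : ℝ) < n ^ 2 := by nlinarith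
  have hlt : (n : ℝ) ^ 2 < 2 := by
    have : c₂ ^ 2 ≤ 1 / 4 := by nlinarith
    nlinarith [mul_le_mul_of_nonneg_left this (sq_nonneg (n : ℝ))]
  have hn : n ^ 2 = 1 := by
    have hpos' : 0 < n ^ 2 := by exact_mod_cast hpos
    have hlt' : n ^ 2 < 2 := by exact_mod_cast hlt
    omega
  have hsq : c₁ ^ 2 = c₂ ^ 2 := by
    rw [show (n : ℝ) ^ 2 = 1 by exact_mod_cast hn] at h
    linarith
  exact (pow_left_inj₀ h₁0 h₂0 two_ne_zero).1 hsq

lemma image_intSpan_pair {G H : Type*} [AddCommGroup G] [AddCommGroup H] (f : G →+ H)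
    (x y : G) :
    f '' {v | ∃ a b : ℤ, v = a • x + b • y} = {v | ∃ a b : ℤ, v = a • f x + b • f y} := by
  ext v
  constructor
  · rintro ⟨-, ⟨a, b, rfl⟩, rfl⟩
    exact ⟨a, b, by simp⟩
  · rintro ⟨a, b, rfl⟩
    exact ⟨a • x + b • y, ⟨a, b, rfl⟩, by simp⟩

lemma norm_eq_mul_norm_of_image_eq {Λ₁ Λ₂ : Set E} {x₁ x₂ : E} {α : ℝ} (hα : 0 < α)
    (U : E →ₗᵢ[ℝ] E) (hU : Λ₂ = (fun v => α • U v) '' Λ₁)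
    (hx₁ : x₁ ∈ Λ₁) (hx₁0 : x₁ ≠ 0) (hmin₁ : ∀ v ∈ Λ₁, v ≠ 0 → ‖x₁‖ ≤ ‖v‖)
    (hx₂ : x₂ ∈ Λ₂) (hx₂0 : x₂ ≠ 0) (hmin₂ : ∀ v ∈ Λ₂, v ≠ 0 → ‖x₂‖ ≤ ‖v‖) :
    ‖x₂‖ = α * ‖x₁‖ := by
  have hnorm : ∀ v, ‖α • U v‖ = α * ‖v‖ := fun v => by
    rw [norm_smul, U.norm_map, Real.norm_of_nonneg hα.le]
  apply le_antisymm
  · rw [← hnorm]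
    refine hmin₂ _ (hU ▸ mem_image_of_mem _ hx₁) ?_
    rw [← norm_pos_iff, hnorm]
    exact mul_pos hα (norm_pos_iff.2 hx₁0)
  · rw [hU] at hx₂
    obtain ⟨w, hw, rfl⟩ := hx₂
    rw [hnorm]
    exact mul_le_mul_of_nonneg_left (hmin₁ w hw (by rintro rfl; simp at hx₂0)) hα.le

lemma Module.Basis.exists_smul_linearIsometryEquiv {ι : Type*} (b₁ b₂ : Module.Basis ι ℝ E)
    {α : ℝ} (hα : α ≠ 0) (h : ∀ i j, ⟪b₂ i, b₂ j⟫ = α ^ 2 * ⟪b₁ i, b₁ j⟫) :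
    ∃ U : E ≃ₗᵢ[ℝ] E, ∀ i, α • U (b₁ i) = b₂ i := by
  let f := (b₁.equiv b₂ (Equiv.refl ι)).trans (LinearEquiv.smulOfNeZero ℝ E α⁻¹ (inv_ne_zero hα))
  have hf : ∀ i, f (b₁ i) = α⁻¹ • b₂ i := by simp [f]
  have hinner : ((innerₗ E).compl₁₂ (f : E →ₗ[ℝ] E) f) = innerₗ E :=
    LinearMap.ext_basis b₁ b₁ fun i j => by
      simp only [LinearMap.compl₁₂_apply, LinearEquiv.coe_coe, innerₗ_apply_apply, hf,
        real_inner_smul_left, real_inner_smul_right, h]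
      field_simp
  refine ⟨f.isometryOfInner fun u v => LinearMap.congr_fun₂ hinner u v, fun i => ?_⟩
  change α • f (b₁ i) = b₂ i
  rw [hf, smul_inv_smul₀ hα]

theorem angle_eq_of_similar {x₁ y₁ x₂ y₂ : E} {Λ₁ Λ₂ : Set E}
    (hΛ₁ : Λ₁ = {v | ∃ a b : ℤ, v = a • x₁ + b • y₁})
    (hΛ₂ : Λ₂ = {v | ∃ a b : ℤ, v = a • x₂ + b • y₂})
    (hx₁ : x₁ ≠ 0) (hx₂ : x₂ ≠ 0) (hnorm₁ : ‖x₁‖ = ‖y₁‖) (hnorm₂ : ‖x₂‖ = ‖y₂‖)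
    (hmin₁ : ∀ v ∈ Λ₁, v ≠ 0 → ‖x₁‖ ≤ ‖v‖) (hmin₂ : ∀ v ∈ Λ₂, v ≠ 0 → ‖x₂‖ ≤ ‖v‖)
    (hθ₁ : angle x₁ y₁ ∈ Icc (π / 3) (π / 2)) (hθ₂ : angle x₂ y₂ ∈ Icc (π / 3) (π / 2))
    {α : ℝ} (hα : 0 < α) (U : E →ₗᵢ[ℝ] E) (hU : Λ₂ = (fun v => α • U v) '' Λ₁) :
    angle x₁ y₁ = angle x₂ y₂ := by
  subst hΛ₁ hΛ₂
  have hx₁mem : x₁ ∈ {v | ∃ a b : ℤ, v = a • x₁ + b • y₁} := ⟨1, 0, by simp⟩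
  have hy₁mem : y₁ ∈ {v | ∃ a b : ℤ, v = a • x₁ + b • y₁} := ⟨0, 1, by simp⟩
  have hm : ‖x₂‖ = α * ‖x₁‖ :=
    norm_eq_mul_norm_of_image_eq hα U hU hx₁mem hx₁ hmin₁ ⟨1, 0, by simp⟩ hx₂ hmin₂
  obtain ⟨a, b, hab⟩ : α • U x₁ ∈ {v | ∃ a b : ℤ, v = a • x₂ + b • y₂} :=
    hU ▸ mem_image_of_mem _ hx₁mem
  obtain ⟨c, d, hcd⟩ : α • U y₁ ∈ {v | ∃ a b : ℤ, v = a • x₂ + b • y₂} :=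
    hU ▸ mem_image_of_mem _ hy₁mem
  have hgram : ‖x₂‖ ^ 4 * (1 - cos (angle x₁ y₁) ^ 2) =
      ‖x₂‖ ^ 4 * (((a * d - b * c : ℤ) : ℝ) ^ 2 * (1 - cos (angle x₂ y₂) ^ 2)) :=
    calc ‖x₂‖ ^ 4 * (1 - cos (angle x₁ y₁) ^ 2) = α ^ 4 * gramDet x₁ y₁ := by
          rw [gramDet_eq_of_norm_eq hnorm₁, hm]; ring
      _ = gramDet (α • U x₁) (α • U y₁) := by rw [gramDet_smul, U.gramDet_map]
      _ = _ := by rw [hab, hcd, gramDet_zsmul_add_zsmul, gramDet_eq_of_norm_eq hnorm₂]; ring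
  have hcos := eq_of_one_sub_sq_eq_int_sq_mul _ (cos_mem_Icc_of_mem_Icc_pi_div_three hθ₁)
    (cos_mem_Icc_of_mem_Icc_pi_div_three hθ₂)
    (mul_left_cancel₀ (pow_ne_zero 4 (norm_ne_zero_iff.2 hx₂)) hgram)
  exact injOn_cos ⟨angle_nonneg _ _, angle_le_pi _ _⟩ ⟨angle_nonneg _ _, angle_le_pi _ _⟩ hcos

theorem exists_similarity_of_angle_eq (hE : Module.finrank ℝ E = 2) {x₁ y₁ x₂ y₂ : E}
    (hli₁ : LinearIndependent ℝ ![x₁, y₁]) (hli₂ : LinearIndependent ℝ ![x₂, y₂])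
    (hnorm₁ : ‖x₁‖ = ‖y₁‖) (hnorm₂ : ‖x₂‖ = ‖y₂‖) (hθ : angle x₁ y₁ = angle x₂ y₂) :
    ∃ α : ℝ, 0 < α ∧ ∃ U : E ≃ₗᵢ[ℝ] E, α • U x₁ = x₂ ∧ α • U y₁ = y₂ := by
  have hx₁ : x₁ ≠ 0 := by simpa using hli₁.ne_zero 0
  have hx₂ : x₂ ≠ 0 := by simpa using hli₂.ne_zero 0
  set α := ‖x₂‖ / ‖x₁‖
  have hα : 0 < α := div_pos (norm_pos_iff.2 hx₂) (norm_pos_iff.2 hx₁)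
  have hα2 : ‖x₂‖ ^ 2 = α ^ 2 * ‖x₁‖ ^ 2 := by
    rw [div_pow, div_mul_cancel₀ _ (pow_ne_zero 2 (norm_ne_zero_iff.2 hx₁))]
  have hcard : Fintype.card (Fin 2) = Module.finrank ℝ E := by simp [hE]
  let b₁ := basisOfLinearIndependentOfCardEqFinrank hli₁ hcard
  let b₂ := basisOfLinearIndependentOfCardEqFinrank hli₂ hcard
  have hxy : ⟪x₂, y₂⟫ = α ^ 2 * ⟪x₁, y₁⟫ := by
    rw [inner_eq_of_norm_eq hnorm₁, inner_eq_of_norm_eq hnorm₂, hα2, hθ, mul_assoc]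
  obtain ⟨U, hU⟩ := b₁.exists_smul_linearIsometryEquiv b₂ hα.ne' fun i j => by
    fin_cases i <;> fin_cases j <;>
      simp [b₁, b₂, hα2, hxy, ← hnorm₁, ← hnorm₂, real_inner_comm x₁ y₁,
        real_inner_comm x₂ y₂]
  exact ⟨α, hα, U, by simpa [b₁, b₂] using hU 0, by simpa [b₁, b₂] using hU 1⟩

/-- Two full-rank well-rounded planar lattices, with minimal bases making angles
`θ₁, θ₂ ∈ [π/3, π/2]`, are similar (`Λ₂ = α U Λ₁` with `α > 0` and `U` orthogonal)
if and only if `θ₁ = θ₂`. -/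
theorem stmt_11 (x₁ y₁ x₂ y₂ : EuclideanSpace ℝ (Fin 2))
    (Λ₁ Λ₂ : Set (EuclideanSpace ℝ (Fin 2)))
    (hΛ₁ : Λ₁ = {v | ∃ a b : ℤ, v = a • x₁ + b • y₁})
    (hΛ₂ : Λ₂ = {v | ∃ a b : ℤ, v = a • x₂ + b • y₂})
    (hli₁ : LinearIndependent ℝ ![x₁, y₁]) (hli₂ : LinearIndependent ℝ ![x₂, y₂])
    (hnorm₁ : ‖x₁‖ = ‖y₁‖) (hnorm₂ : ‖x₂‖ = ‖y₂‖)
    (hmin₁ : ∀ v ∈ Λ₁, v ≠ 0 → ‖x₁‖ ≤ ‖v‖)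
    (hmin₂ : ∀ v ∈ Λ₂, v ≠ 0 → ‖x₂‖ ≤ ‖v‖)
    (θ₁ θ₂ : ℝ)
    (hθ₁ : θ₁ = InnerProductGeometry.angle x₁ y₁)
    (hθ₂ : θ₂ = InnerProductGeometry.angle x₂ y₂)
    (hθ₁mem : θ₁ ∈ Set.Icc (Real.pi / 3) (Real.pi / 2))
    (hθ₂mem : θ₂ ∈ Set.Icc (Real.pi / 3) (Real.pi / 2)) :
    (∃ α : ℝ, 0 < α ∧ ∃ U : EuclideanSpace ℝ (Fin 2) ≃ₗᵢ[ℝ] EuclideanSpace ℝ (Fin 2),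
        Λ₂ = (fun v => α • U v) '' Λ₁) ↔ θ₁ = θ₂ := by
  subst hθ₁ hθ₂
  constructor
  · rintro ⟨α, hα, U, hU⟩
    exact angle_eq_of_similar hΛ₁ hΛ₂ (by simpa using hli₁.ne_zero 0)
      (by simpa using hli₂.ne_zero 0) hnorm₁ hnorm₂ hmin₁ hmin₂ hθ₁mem hθ₂mem hα
      U.toLinearIsometry hU
  · intro hθ
    obtain ⟨α, hα, U, hUx, hUy⟩ :=
      exists_similarity_of_angle_eq finrank_euclideanSpace_fin hli₁ hli₂ hnorm₁ hnorm₂ hθ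
    refine ⟨α, hα, U, ?_⟩
    rw [hΛ₁, hΛ₂, ← hUx, ← hUy]
    exact (image_intSpan_pair (α • U.toLinearEquiv.toLinearMap).toAddMonoidHom x₁ y₁).symm
end

section
/- Let D ≡ 3 (mod 4) be a positive squarefree integer, K = ℚ(√(−D)), and I ⊂ O_K an ideal with canonical basis a, b+δ (δ = −√(−D), b < a, a | b²+D). If the associated lattice Λ = [[a, b],[0, √D]]·ℤ² ⊂ ℝ² is well-rounded, then there exist coprime positive integers p, q with p² + D = q² and p/q ≤ 1/2 (in particular, D has a divisor d with √(D/3) ≤ d < √D). -/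
/-!
If `v₁, v₂` are linearly independent minimal vectors of a lattice `L` with `‖v₁‖ = ‖v₂‖`, then
`2 |⟪v₁, v₂⟫| ≤ ‖v₁‖²` (compare with `v₁ ± v₂`), hence `‖r v₁ + t v₂‖ < ‖v₁‖` for `|r|, |t| ≤ 1/2`;
rounding coefficients then shows that `v₁, v₂` is a basis of `L`.

For `Λ`, the inner product of two lattice vectors is `a` times the value of the integral
bilinear form of `a x² + 2 b x y + k y²` (where `b² + D = a k`), whose determinant is
`a k - b² = D`. In the basis `v₁, v₂`, which differs from `u, w` by a unimodular matrix, its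
Gram matrix is `[[μ, σ], [σ, μ]]`, so `μ² - σ² = D` and `2 |σ| ≤ μ`. Since `D` is squarefree, `gcd (σ, μ)² ∣ D` forces coprimality, and `σ ≠ 0`
because `D ≠ 1`.
-/

open scoped RealInnerProductSpace

section WellRounded

variable {E : Type*} [NormedAddCommGroup E] [InnerProductSpace ℝ E]

structure IsWellRoundedPair (L : AddSubgroup E) (v₁ v₂ : E) : Prop where
  mem_left : v₁ ∈ L
  mem_right : v₂ ∈ L
  linearIndependent : LinearIndependent ℝ ![v₁, v₂]
  norm_eq : ‖v₁‖ = ‖v₂‖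
  norm_le : ∀ v ∈ L, v ≠ 0 → ‖v₁‖ ≤ ‖v‖

namespace IsWellRoundedPair

variable {L : AddSubgroup E} {v₁ v₂ : E}

theorem ne_zero_left (h : IsWellRoundedPair L v₁ v₂) : v₁ ≠ 0 :=
  h.linearIndependent.ne_zero 0

theorem eq_zero_of_zsmul_add_zsmul_eq_zero (h : IsWellRoundedPair L v₁ v₂) {c d : ℤ}
    (hcd : c • v₁ + d • v₂ = 0) : c = 0 ∧ d = 0 :=
  LinearIndependent.pair_iff.mp (h.linearIndependent.restrict_scalars' ℤ) c d hcd

theorem two_mul_abs_inner_le (h : IsWellRoundedPair L v₁ v₂) :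
    2 * |⟪v₁, v₂⟫| ≤ ‖v₁‖ ^ 2 := by
  have hadd : v₁ + v₂ ≠ 0 := fun h0 ↦ one_ne_zero
    (h.eq_zero_of_zsmul_add_zsmul_eq_zero (c := 1) (d := 1) (by simpa using h0)).1
  have hsub : v₁ - v₂ ≠ 0 := fun h0 ↦ one_ne_zero
    (h.eq_zero_of_zsmul_add_zsmul_eq_zero (c := 1) (d := -1)
      (by simpa [← sub_eq_add_neg] using h0)).1
  have hplus := pow_le_pow_left₀ (norm_nonneg _)
    (h.norm_le _ (add_mem h.mem_left h.mem_right) hadd) 2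
  have hminus := pow_le_pow_left₀ (norm_nonneg _)
    (h.norm_le _ (sub_mem h.mem_left h.mem_right) hsub) 2
  rw [norm_add_sq_real, ← h.norm_eq] at hplus
  rw [norm_sub_sq_real, ← h.norm_eq] at hminus
  rcases abs_cases ⟪v₁, v₂⟫ with ⟨habs, _⟩ | ⟨habs, _⟩ <;> rw [habs] <;> linarith

theorem norm_smul_add_smul_lt (h : IsWellRoundedPair L v₁ v₂) {r t : ℝ} (hr : |r| ≤ 1 / 2)
    (ht : |t| ≤ 1 / 2) : ‖r • v₁ + t • v₂‖ < ‖v₁‖ := by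
  have hpos : 0 < ‖v₁‖ ^ 2 := pow_pos (norm_pos_iff.mpr h.ne_zero_left) 2
  have hS := h.two_mul_abs_inner_le
  have hexpand : ‖r • v₁ + t • v₂‖ ^ 2
      = r ^ 2 * ‖v₁‖ ^ 2 + 2 * (r * t) * ⟪v₁, v₂⟫ + t ^ 2 * ‖v₁‖ ^ 2 := by
    rw [norm_add_sq_real, norm_smul, norm_smul, real_inner_smul_left, real_inner_smul_right,
      ← h.norm_eq, mul_pow, mul_pow, Real.norm_eq_abs, Real.norm_eq_abs, sq_abs, sq_abs]
    ring
  have hr2 : r ^ 2 ≤ 1 / 4 := by nlinarith [abs_nonneg r, sq_abs r]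
  have ht2 : t ^ 2 ≤ 1 / 4 := by nlinarith [abs_nonneg t, sq_abs t]
  have hrt : |r * t| ≤ 1 / 4 := by rw [abs_mul]; nlinarith [abs_nonneg r, abs_nonneg t]
  have hcross : (r * t) * ⟪v₁, v₂⟫ ≤ |r * t| * |⟪v₁, v₂⟫| := by
    rw [← abs_mul]; exact le_abs_self _
  refine lt_of_pow_lt_pow_left₀ 2 (norm_nonneg _) ?_
  rw [hexpand]
  nlinarith [abs_nonneg (r * t), abs_nonneg ⟪v₁, v₂⟫]

theorem exists_intCast_of_smul_add_smul_mem (h : IsWellRoundedPair L v₁ v₂) {α β : ℝ}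
    (hαβ : α • v₁ + β • v₂ ∈ L) : (∃ m : ℤ, α = m) ∧ ∃ m : ℤ, β = m := by
  have hmem : (α - round α) • v₁ + (β - round β) • v₂ ∈ L := by
    have heq : (α - round α) • v₁ + (β - round β) • v₂
        = α • v₁ + β • v₂ - (round α • v₁ + round β • v₂) := by
      simp only [sub_smul, Int.cast_smul_eq_zsmul]; abel
    rw [heq]
    exact sub_mem hαβ (add_mem (zsmul_mem h.mem_left _) (zsmul_mem h.mem_right _))
  have hzero : (α - round α) • v₁ + (β - round β) • v₂ = 0 := by
    by_contra hne
    exact (h.norm_le _ hmem hne).not_gt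
      (h.norm_smul_add_smul_lt (abs_sub_round α) (abs_sub_round β))
  obtain ⟨hα, hβ⟩ := LinearIndependent.pair_iff.mp h.linearIndependent _ _ hzero
  exact ⟨⟨round α, sub_eq_zero.mp hα⟩, ⟨round β, sub_eq_zero.mp hβ⟩⟩

theorem dvd_of_zsmul_eq (h : IsWellRoundedPair L v₁ v₂) {x : E} (hx : x ∈ L) {n c d : ℤ}
    (hn : n ≠ 0) (hnx : n • x = c • v₁ + d • v₂) : n ∣ c ∧ n ∣ d := by
  have hnR : (n : ℝ) ≠ 0 := Int.cast_ne_zero.mpr hn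
  have hx' : ((c : ℝ) / n) • v₁ + ((d : ℝ) / n) • v₂ = x := by
    rw [div_eq_inv_mul, div_eq_inv_mul, mul_smul, mul_smul, ← smul_add, Int.cast_smul_eq_zsmul,
      Int.cast_smul_eq_zsmul, ← hnx, ← Int.cast_smul_eq_zsmul ℝ, smul_smul, inv_mul_cancel₀ hnR,
      one_smul]
  obtain ⟨⟨m, hm⟩, ⟨m', hm'⟩⟩ := h.exists_intCast_of_smul_add_smul_mem (hx' ▸ hx)
  rw [div_eq_iff hnR] at hm hm'
  exact ⟨⟨m, by exact_mod_cast hm.trans (mul_comm _ _)⟩,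
    ⟨m', by exact_mod_cast hm'.trans (mul_comm _ _)⟩⟩

theorem isUnit_mul_sub_mul (h : IsWellRoundedPair L v₁ v₂) {u w : E} (hu : u ∈ L) (hw : w ∈ L)
    {x₁ y₁ x₂ y₂ : ℤ} (h₁ : v₁ = x₁ • u + y₁ • w) (h₂ : v₂ = x₂ • u + y₂ • w) :
    IsUnit (x₁ * y₂ - x₂ * y₁) := by
  have hnu : (x₁ * y₂ - x₂ * y₁) • u = y₂ • v₁ + (-y₁) • v₂ := by rw [h₁, h₂]; module
  have hnw : (x₁ * y₂ - x₂ * y₁) • w = (-x₂) • v₁ + x₁ • v₂ := by rw [h₁, h₂]; module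
  have hn : x₁ * y₂ - x₂ * y₁ ≠ 0 := by
    intro hn
    rw [hn, zero_smul] at hnu hnw
    obtain ⟨hy₂, hy₁⟩ := h.eq_zero_of_zsmul_add_zsmul_eq_zero hnu.symm
    obtain ⟨hx₂, hx₁⟩ := h.eq_zero_of_zsmul_add_zsmul_eq_zero hnw.symm
    exact h.ne_zero_left (by simp [h₁, hx₁, neg_eq_zero.mp hy₁])
  obtain ⟨hy₂, hy₁⟩ := h.dvd_of_zsmul_eq hu hn hnu
  obtain ⟨hx₂, hx₁⟩ := h.dvd_of_zsmul_eq hw hn hnw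
  have hsq : (x₁ * y₂ - x₂ * y₁) * (x₁ * y₂ - x₂ * y₁) ∣ (x₁ * y₂ - x₂ * y₁) * 1 := by
    rw [mul_one]
    exact dvd_sub (mul_dvd_mul hx₁ hy₂) (mul_dvd_mul (dvd_neg.mp hx₂) (dvd_neg.mp hy₁))
  exact isUnit_of_dvd_one ((mul_dvd_mul_iff_left hn).mp hsq)

end IsWellRoundedPair

end WellRounded

theorem setOf_zsmul_add_zsmul_eq_closure {E : Type*} [AddCommGroup E] (u w : E) :
    {v | ∃ x y : ℤ, v = x • u + y • w} = (AddSubgroup.closure {u, w} : Set E) := by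
  ext v
  simp [AddSubgroup.mem_closure_pair, eq_comm]

theorem inner_zsmul_add_zsmul {a b D : ℕ} {u w : EuclideanSpace ℝ (Fin 2)}
    (hu : u = ![(a : ℝ), 0]) (hw : w = ![(b : ℝ), Real.sqrt D]) (x y x' y' : ℤ) :
    ⟪x • u + y • w, x' • u + y' • w⟫
      = (((a * x + b * y) * (a * x' + b * y') + D * (y * y') : ℤ) : ℝ) := by
  simp only [← Int.cast_smul_eq_zsmul ℝ, PiLp.inner_apply, RCLike.inner_apply, Fin.sum_univ_two,
    PiLp.add_apply, PiLp.smul_apply, hu, hw]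
  simp only [Matrix.cons_val_zero, Matrix.cons_val_one, smul_eq_mul, conj_trivial]
  push_cast
  linear_combination (↑y * ↑y' : ℝ) * Real.sq_sqrt (Nat.cast_nonneg (α := ℝ) D)

theorem exists_sq_sub_sq_eq_of_isWellRoundedPair {a b D : ℕ} (ha : 0 < a) (hdvd : a ∣ b ^ 2 + D)
    {u w v₁ v₂ : EuclideanSpace ℝ (Fin 2)} (hu : u = ![(a : ℝ), 0])
    (hw : w = ![(b : ℝ), Real.sqrt D]) (h : IsWellRoundedPair (AddSubgroup.closure {u, w}) v₁ v₂) :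
    ∃ μ σ : ℤ, μ ^ 2 - σ ^ 2 = D ∧ 2 * |σ| ≤ μ := by
  obtain ⟨x₁, y₁, rfl⟩ := AddSubgroup.mem_closure_pair.mp h.mem_left
  obtain ⟨x₂, y₂, rfl⟩ := AddSubgroup.mem_closure_pair.mp h.mem_right
  have hdet := Int.isUnit_sq <| h.isUnit_mul_sub_mul (AddSubgroup.subset_closure (by simp))
    (AddSubgroup.subset_closure (by simp)) rfl rfl
  obtain ⟨k, hk⟩ := hdvd
  have hkZ : (b : ℤ) ^ 2 + D = a * k := by exact_mod_cast hk
  have hinner (x y x' y' : ℤ) : ⟪x • u + y • w, x' • u + y' • w⟫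
      = a * ((a * x * x' + b * (x * y' + x' * y) + k * y * y' : ℤ) : ℝ) := by
    rw [inner_zsmul_add_zsmul hu hw]
    exact_mod_cast (by linear_combination (y * y') * hkZ)
  have haR : (0 : ℝ) < a := by exact_mod_cast ha
  have hnorm := congrArg (· ^ 2) h.norm_eq
  simp only [← real_inner_self_eq_norm_sq, hinner] at hnorm
  have hσμ := h.two_mul_abs_inner_le
  rw [← real_inner_self_eq_norm_sq, hinner, hinner, abs_mul, abs_of_pos haR] at hσμ
  set μ := a * x₁ * x₁ + b * (x₁ * y₁ + x₁ * y₁) + k * y₁ * y₁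
  set σ := a * x₁ * x₂ + b * (x₁ * y₂ + x₂ * y₁) + k * y₁ * y₂
  have hμν := Int.cast_injective (mul_left_cancel₀ haR.ne' hnorm)
  refine ⟨μ, σ, ?_, ?_⟩
  · linear_combination μ * hμν - hkZ + (a * k - b ^ 2) * hdet
  · have hle : (a : ℝ) * (2 * |(σ : ℝ)|) ≤ a * μ := by linarith
    exact_mod_cast le_of_mul_le_mul_left hle haR

theorem Nat.coprime_of_sq_add_eq_sq {D p q : ℕ} (hsf : Squarefree D) (h : p ^ 2 + D = q ^ 2) :
    Nat.Coprime p q := by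
  have hp : Nat.gcd p q ^ 2 ∣ p ^ 2 := pow_dvd_pow_of_dvd (Nat.gcd_dvd_left p q) 2
  have hq : Nat.gcd p q ^ 2 ∣ q ^ 2 := pow_dvd_pow_of_dvd (Nat.gcd_dvd_right p q) 2
  rw [← h] at hq
  exact Nat.isUnit_iff.mp (hsf _ (sq (Nat.gcd p q) ▸ (Nat.dvd_add_right hp).mp hq))

theorem exists_coprime_sq_add_eq_sq {D : ℕ} (hsf : Squarefree D) (hD : D ≠ 1) {μ σ : ℤ}
    (h : μ ^ 2 - σ ^ 2 = D) (hσμ : 2 * |σ| ≤ μ) :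
    ∃ p q : ℕ, 0 < p ∧ 0 < q ∧ Nat.gcd p q = 1 ∧ p ^ 2 + D = q ^ 2 ∧ 2 * p ≤ q := by
  have hpq : σ.natAbs ^ 2 + D = μ.natAbs ^ 2 := by
    zify; rw [sq_abs, sq_abs]; linarith
  have hp : σ.natAbs ≠ 0 := by
    intro hp
    rw [hp, zero_pow two_ne_zero, zero_add] at hpq
    have hμ : μ.natAbs = 1 := Nat.isUnit_iff.mp (hsf _ ⟨1, by rw [hpq, sq, mul_one]⟩)
    exact hD (by rw [hpq, hμ, one_pow])
  have hq : μ.natAbs ≠ 0 := by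
    intro hq
    rw [hq, zero_pow two_ne_zero] at hpq
    exact hsf.ne_zero (by omega)
  refine ⟨σ.natAbs, μ.natAbs, Nat.pos_of_ne_zero hp, Nat.pos_of_ne_zero hq,
    Nat.coprime_of_sq_add_eq_sq hsf hpq, hpq, ?_⟩
  zify
  rw [abs_of_nonneg (by linarith [abs_nonneg σ] : 0 ≤ μ)]
  exact hσμ

theorem stmt_15_general (D : ℕ) (hsf : Squarefree D) (hmod : D % 4 = 3)
    (a b : ℕ) (ha : 0 < a) (hdvd : a ∣ b ^ 2 + D)
    (u w : EuclideanSpace ℝ (Fin 2))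
    (hu : u = ![(a : ℝ), 0]) (hw : w = ![(b : ℝ), Real.sqrt D])
    (Λ : Set (EuclideanSpace ℝ (Fin 2)))
    (hΛ : Λ = {v | ∃ x y : ℤ, v = x • u + y • w})
    (hWR : ∃ v₁ ∈ Λ, ∃ v₂ ∈ Λ, LinearIndependent ℝ ![v₁, v₂] ∧ ‖v₁‖ = ‖v₂‖ ∧
      ∀ v ∈ Λ, v ≠ 0 → ‖v₁‖ ≤ ‖v‖) :
    ∃ p q : ℕ, 0 < p ∧ 0 < q ∧ Nat.gcd p q = 1 ∧ p ^ 2 + D = q ^ 2 ∧ 2 * p ≤ q := by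
  rw [hΛ, setOf_zsmul_add_zsmul_eq_closure] at hWR
  obtain ⟨v₁, hv₁, v₂, hv₂, hind, hnorm, hmin⟩ := hWR
  obtain ⟨μ, σ, hμσ, hσμ⟩ :=
    exists_sq_sub_sq_eq_of_isWellRoundedPair ha hdvd hu hw ⟨hv₁, hv₂, hind, hnorm, hmin⟩
  exact exists_coprime_sq_add_eq_sq hsf (by omega) hμσ hσμ

/-- Let `D ≡ 3 (mod 4)` be positive squarefree, and let `a, b` be the canonical basis
data of an ideal of `ℤ[√(-D)]` (`b < a`, `a ∣ b² + D`). If the associated lattice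
`Λ = [[a, b],[0, √D]]·ℤ²` is well-rounded, then there are coprime positive integers
`p, q` with `p² + D = q²` and `p/q ≤ 1/2`. -/
theorem stmt_15 (D : ℕ) (hD : 0 < D) (hsf : Squarefree D) (hmod : D % 4 = 3)
    (a b : ℕ) (ha : 0 < a) (hba : b < a) (hdvd : a ∣ b ^ 2 + D)
    (u w : EuclideanSpace ℝ (Fin 2))
    (hu : u = ![(a : ℝ), 0]) (hw : w = ![(b : ℝ), Real.sqrt D])
    (Λ : Set (EuclideanSpace ℝ (Fin 2)))
    (hΛ : Λ = {v | ∃ x y : ℤ, v = x • u + y • w})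
    (hWR : ∃ v₁ ∈ Λ, ∃ v₂ ∈ Λ, LinearIndependent ℝ ![v₁, v₂] ∧ ‖v₁‖ = ‖v₂‖ ∧
      ∀ v ∈ Λ, v ≠ 0 → ‖v₁‖ ≤ ‖v‖) :
    ∃ p q : ℕ, 0 < p ∧ 0 < q ∧ Nat.gcd p q = 1 ∧ p ^ 2 + D = q ^ 2 ∧ 2 * p ≤ q :=
  stmt_15_general D hsf hmod a b ha hdvd u w hu hw Λ hΛ hWR
end

section
/- Let D ≢ 1 (mod 4) be a positive squarefree integer, K = ℚ(√D), and suppose a, b are positive integers with b < a, a | b² − D (so that a, b − √D generate an ideal of ℤ[√D]), and min{a², b² + D} ≥ 2ab. If the lattice Λ = [[a, b−√D],[a, b+√D]]·ℤ² is well-rounded, then a² = b² + D (hence a | 2D). -/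
/-!
The squared length of `x v₁ + y v₂` is `2 Q(x, y)` with `Q = a² x² + 2ab x y + (b² + D) y²`,
which the Minkowski condition makes a reduced form. A reduced form `A x² + B x y + C y²` takes
values `≥ C` wherever `y ≠ 0` and `≥ A` wherever `x ≠ 0`; so if `A ≠ C`, all vectors of minimal
value lie on one coordinate axis and no two of them are independent. Hence `a² = b² + D`, and
`a ∣ (b² + D) - (b² - D) = 2D`.
-/

def binaryForm (A B C x y : ℤ) : ℤ := A * x ^ 2 + B * x * y + C * y ^ 2

lemma binaryForm_comm (A B C x y : ℤ) : binaryForm A B C x y = binaryForm C B A y x := by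
  unfold binaryForm
  ring

section Reduced

variable {A B C : ℤ} (hBA : |B| ≤ A) (hBC : |B| ≤ C)
include hBA hBC

lemma le_binaryForm {x y : ℤ} (hy : y ≠ 0) : C ≤ binaryForm A B C x y := by
  have hy1 : 1 ≤ y ^ 2 := (one_le_sq_iff_one_le_abs y).2 (Int.one_le_abs hy)
  have hBxy : -(|B| * (|x| * |y|)) ≤ B * x * y := by
    rw [mul_assoc, ← abs_mul, ← abs_mul]
    exact neg_abs_le _
  unfold binaryForm
  rcases le_total |x| |y| with hxy | hyx
  · have : |x| * |y| ≤ y ^ 2 := by nlinarith [abs_nonneg x, sq_abs y]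
    rcases eq_or_ne x 0 with rfl | hx
    · nlinarith [abs_nonneg B]
    · have hx1 : 1 ≤ x ^ 2 := (one_le_sq_iff_one_le_abs x).2 (Int.one_le_abs hx)
      nlinarith [abs_nonneg B]
  · have : |x| * |y| ≤ x ^ 2 := by nlinarith [abs_nonneg y, sq_abs x]
    nlinarith [abs_nonneg B]

lemma eq_zero_of_binaryForm_lt {x y : ℤ} (h : binaryForm A B C x y < C) : y = 0 :=
  not_not.1 fun hy => (le_binaryForm hBA hBC hy).not_gt h

lemma eq_of_binaryForm_le {x₁ y₁ x₂ y₂ : ℤ} (hdet : x₁ * y₂ - x₂ * y₁ ≠ 0)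
    (h₁A : binaryForm A B C x₁ y₁ ≤ A) (h₁C : binaryForm A B C x₁ y₁ ≤ C)
    (h₂A : binaryForm A B C x₂ y₂ ≤ A) (h₂C : binaryForm A B C x₂ y₂ ≤ C) : A = C := by
  rcases lt_trichotomy A C with hlt | heq | hgt
  · have hy₁ := eq_zero_of_binaryForm_lt hBA hBC (h₁A.trans_lt hlt)
    have hy₂ := eq_zero_of_binaryForm_lt hBA hBC (h₂A.trans_lt hlt)
    simp [hy₁, hy₂] at hdet
  · exact heq
  · rw [binaryForm_comm] at h₁C h₂C
    have hx₁ := eq_zero_of_binaryForm_lt hBC hBA (h₁C.trans_lt hgt)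
    have hx₂ := eq_zero_of_binaryForm_lt hBC hBA (h₂C.trans_lt hgt)
    simp [hx₁, hx₂] at hdet

end Reduced

lemma sub_mul_ne_zero_of_linearIndependent {R M : Type*} [CommRing R] [Nontrivial R]
    [AddCommGroup M] [Module R M] {v₁ v₂ : M} {x₁ y₁ x₂ y₂ : R}
    (h : LinearIndependent R ![x₁ • v₁ + y₁ • v₂, x₂ • v₁ + y₂ • v₂]) :
    x₁ * y₂ - x₂ * y₁ ≠ 0 := by
  intro hdet
  have hy := LinearIndependent.pair_iff.1 h y₂ (-y₁) (by
    linear_combination (norm := module) hdet • v₁)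
  have hx := LinearIndependent.pair_iff.1 h (-x₂) x₁ (by
    linear_combination (norm := module) hdet • v₂)
  rw [neg_eq_zero] at hx hy
  simpa [hx.2, hy.2] using h.ne_zero 0

lemma norm_sq_smul_add_smul {a b D : ℝ} (hD : 0 ≤ D) {v₁ v₂ : EuclideanSpace ℝ (Fin 2)}
    (hv₁ : v₁.ofLp = ![a, a]) (hv₂ : v₂.ofLp = ![b - √D, b + √D]) (x y : ℝ) :
    ‖x • v₁ + y • v₂‖ ^ 2 = 2 * ((a * x + b * y) ^ 2 + D * y ^ 2) := by
  rw [EuclideanSpace.norm_sq_eq, Fin.sum_univ_two]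
  simp only [PiLp.add_apply, PiLp.smul_apply, hv₁, hv₂, Matrix.cons_val_zero,
    Matrix.cons_val_one, smul_eq_mul, Real.norm_eq_abs, sq_abs]
  linear_combination 2 * y ^ 2 * Real.sq_sqrt hD

theorem stmt_17_general (D : ℕ) (hD : 0 < D)
    (a b : ℕ) (ha : 0 < a)
    (hdvd : (a : ℤ) ∣ (b : ℤ) ^ 2 - D)
    (hred : 2 * a * b ≤ a ^ 2 ∧ 2 * a * b ≤ b ^ 2 + D)
    (v₁ v₂ : EuclideanSpace ℝ (Fin 2))
    (hv₁ : v₁ = ![(a : ℝ), (a : ℝ)])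
    (hv₂ : v₂ = ![(b : ℝ) - Real.sqrt D, (b : ℝ) + Real.sqrt D])
    (Λ : Set (EuclideanSpace ℝ (Fin 2)))
    (hΛ : Λ = {v | ∃ x y : ℤ, v = x • v₁ + y • v₂})
    (hWR : ∃ w₁ ∈ Λ, ∃ w₂ ∈ Λ, LinearIndependent ℝ ![w₁, w₂] ∧ ‖w₁‖ = ‖w₂‖ ∧
      ∀ v ∈ Λ, v ≠ 0 → ‖w₁‖ ≤ ‖v‖) :
    a ^ 2 = b ^ 2 + D ∧ a ∣ 2 * D := by
  set Q := binaryForm (a ^ 2) (2 * a * b) (b ^ 2 + D)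
  have hQ (x y : ℤ) : ‖x • v₁ + y • v₂‖ ^ 2 = 2 * (Q x y : ℝ) := by
    rw [← Int.cast_smul_eq_zsmul ℝ x, ← Int.cast_smul_eq_zsmul ℝ y,
      norm_sq_smul_add_smul D.cast_nonneg hv₁ hv₂]
    simp only [Q, binaryForm]
    push_cast
    ring
  obtain ⟨w₁, ⟨x₁, y₁, rfl⟩, w₂, ⟨x₂, y₂, rfl⟩, hli, hw₁₂, hmin⟩ := hΛ ▸ hWR
  have hQ_min (x y : ℤ) (hpos : 0 < Q x y) : Q x₁ y₁ ≤ Q x y := by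
    have hne : x • v₁ + y • v₂ ≠ 0 := fun h0 => by simpa [h0, hpos.ne'] using hQ x y
    have := pow_le_pow_left₀ (norm_nonneg _) (hmin _ ⟨x, y, rfl⟩ hne) 2
    rw [hQ, hQ] at this
    exact_mod_cast le_of_mul_le_mul_left this two_pos
  have hQ₂ : Q x₂ y₂ = Q x₁ y₁ := by
    have := congrArg (· ^ 2) hw₁₂.symm
    simp only [hQ] at this
    exact_mod_cast mul_left_cancel₀ two_ne_zero this
  have hA : Q x₁ y₁ ≤ a ^ 2 := by
    simpa [Q, binaryForm] using hQ_min 1 0 (by simp [Q, binaryForm, ha])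
  have hC : Q x₁ y₁ ≤ b ^ 2 + D := by
    simpa [Q, binaryForm] using hQ_min 0 1 (by simp [Q, binaryForm]; positivity)
  have hdet : x₁ * y₂ - x₂ * y₁ ≠ 0 := by
    simp only [← Int.cast_smul_eq_zsmul ℝ] at hli
    exact_mod_cast sub_mul_ne_zero_of_linearIndependent hli
  have hB : |(2 * a * b : ℤ)| = 2 * a * b := abs_of_nonneg (by positivity)
  have hAC : (a ^ 2 : ℤ) = b ^ 2 + D := eq_of_binaryForm_le (hB ▸ mod_cast hred.1)
    (hB ▸ mod_cast hred.2) hdet hA hC (hQ₂.trans_le hA) (hQ₂.trans_le hC)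
  refine ⟨mod_cast hAC, Int.natCast_dvd_natCast.1 ?_⟩
  have h2D : ((2 * D : ℕ) : ℤ) = a * a - (b ^ 2 - D) := by
    push_cast
    linear_combination -hAC
  exact h2D ▸ dvd_sub (dvd_mul_right _ _) hdvd

/-- Let `D ≢ 1 (mod 4)` be positive squarefree, `a, b` positive integers with `b < a`,
`a ∣ b² - D` and `min{a², b² + D} ≥ 2ab`. If the lattice with basis matrix
`[[a, b-√D],[a, b+√D]]` is well-rounded, then `a² = b² + D` (hence `a ∣ 2D`). -/
theorem stmt_17 (D : ℕ) (hD : 0 < D) (hsf : Squarefree D) (hmod : D % 4 ≠ 1)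
    (a b : ℕ) (ha : 0 < a) (hb : 0 < b) (hba : b < a)
    (hdvd : (a : ℤ) ∣ (b : ℤ) ^ 2 - D)
    (hred : 2 * a * b ≤ a ^ 2 ∧ 2 * a * b ≤ b ^ 2 + D)
    (v₁ v₂ : EuclideanSpace ℝ (Fin 2))
    (hv₁ : v₁ = ![(a : ℝ), (a : ℝ)])
    (hv₂ : v₂ = ![(b : ℝ) - Real.sqrt D, (b : ℝ) + Real.sqrt D])
    (Λ : Set (EuclideanSpace ℝ (Fin 2)))
    (hΛ : Λ = {v | ∃ x y : ℤ, v = x • v₁ + y • v₂})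
    (hWR : ∃ w₁ ∈ Λ, ∃ w₂ ∈ Λ, LinearIndependent ℝ ![w₁, w₂] ∧ ‖w₁‖ = ‖w₂‖ ∧
      ∀ v ∈ Λ, v ≠ 0 → ‖w₁‖ ≤ ‖v‖) :
    a ^ 2 = b ^ 2 + D ∧ a ∣ 2 * D :=
  stmt_17_general D hD a b ha hdvd hred v₁ v₂ hv₁ hv₂ Λ hΛ hWR
end

section
/- For any squarefree positive integer D, the minimal squared norm of the lattice Ω_D(p,q) = [[q,p],[0,r√D]]ℤ² (with p²+r²D=q², gcd(p,q)=1, p/q ≤ 1/2) equals q², i.e. every nonzero vector (qx+py, r√D·y) with (x,y) ∈ ℤ²∖{0} has squared norm at least q². -/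
/-!
The form is `(q x + p y)² + (q² - p²) y² = q² (x² + y²) + 2 p q x y`, and `2 |p| ≤ |q|` bounds the
cross term by `q² |x y|`. So the form is at least `q² (x² - |x y| + y²)`, and `x² - |x y| + y²`
is a positive integer at every nonzero `(x, y)`.
-/

namespace Int

lemma one_le_sq_sub_abs_mul_add_sq {x y : ℤ} (hxy : ¬(x = 0 ∧ y = 0)) :
    1 ≤ x ^ 2 - |x * y| + y ^ 2 := by
  have hpos : 0 < x ^ 2 + y ^ 2 := by
    by_cases hx : x = 0
    · have hy : y ≠ 0 := fun hy => hxy ⟨hx, hy⟩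
      positivity
    · positivity
  -- `2 (x² - |x y| + y²) = (|x| - |y|)² + x² + y²`
  have hsq : 0 ≤ (|x| - |y|) ^ 2 := sq_nonneg _
  rw [abs_mul]
  nlinarith [sq_abs x, sq_abs y]

lemma sq_le_sq_mul_add_sub_sq_mul {p q x y : ℤ} (h2 : 2 * |p| ≤ |q|)
    (hxy : ¬(x = 0 ∧ y = 0)) :
    q ^ 2 ≤ (q * x + p * y) ^ 2 + (q ^ 2 - p ^ 2) * y ^ 2 := by
  have hcross : |2 * p * q * (x * y)| ≤ q ^ 2 * |x * y| := by
    rw [abs_mul, abs_mul, abs_mul, abs_two, ← sq_abs q]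
    gcongr
    nlinarith [abs_nonneg q]
  calc q ^ 2 = q ^ 2 * 1 := (mul_one _).symm
    _ ≤ q ^ 2 * (x ^ 2 - |x * y| + y ^ 2) := by
      gcongr
      exact one_le_sq_sub_abs_mul_add_sq hxy
    _ ≤ q ^ 2 * (x ^ 2 + y ^ 2) + 2 * p * q * (x * y) := by
      nlinarith [neg_abs_le (2 * p * q * (x * y))]
    _ = (q * x + p * y) ^ 2 + (q ^ 2 - p ^ 2) * y ^ 2 := by ring

end Int

theorem stmt_19_general (D p q r : ℕ)
    (hpq : p ^ 2 + D * r ^ 2 = q ^ 2) (h2 : 2 * p ≤ q) :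
    ∀ x y : ℤ, ¬(x = 0 ∧ y = 0) →
      (q : ℤ) ^ 2 ≤ ((q : ℤ) * x + (p : ℤ) * y) ^ 2 + (r : ℤ) ^ 2 * D * y ^ 2 := by
  intro x y hxy
  have hrD : (r : ℤ) ^ 2 * D = (q : ℤ) ^ 2 - (p : ℤ) ^ 2 := by
    rw [eq_sub_iff_add_eq']
    exact_mod_cast (mul_comm D _ ▸ hpq)
  rw [hrD]
  refine Int.sq_le_sq_mul_add_sub_sq_mul ?_ hxy
  rw [Nat.abs_cast, Nat.abs_cast]
  exact_mod_cast h2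

/-- For `p² + Dr² = q²`, `gcd(p,q) = 1`, `p/q ≤ 1/2`, the minimal squared norm of the
lattice `Ω_D(p,q) = [[q, p],[0, r√D]]·ℤ²` is `q²`: every nonzero lattice vector
`(qx + py, r√D·y)` has squared norm `(qx+py)² + r²Dy² ≥ q²`. -/
theorem stmt_19 (D p q r : ℕ) (hD : 0 < D) (hsf : Squarefree D)
    (hq : 0 < q) (hr : 0 < r)
    (hpq : p ^ 2 + D * r ^ 2 = q ^ 2) (hcop : Nat.gcd p q = 1) (h2 : 2 * p ≤ q) :
    ∀ x y : ℤ, ¬(x = 0 ∧ y = 0) →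
      (q : ℤ) ^ 2 ≤ ((q : ℤ) * x + (p : ℤ) * y) ^ 2 + (r : ℤ) ^ 2 * D * y ^ 2 :=
  stmt_19_general D p q r hpq h2
end
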